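/- Let m ≥ 1 and let F be a finite set of strings over the alphabet Fin m, each of length at least 2; for each j ≥ 2 let a_j be the number of elements of F of length j. Let A be the formal power series 1 − m·X + ∑_{j≥2} a_j·X^j over ℝ (a polynomial, since F is finite); A has constant coefficient 1 and hence is invertible in ℝ⟦X⟧. If every coefficient of the inverse power series A⁻¹ is strictly positive, then for every natural number N there exists a string of length N over Fin m that avoids F. -/

import Mathlib

/-!
Let `c n` be the number of words of length `n` avoiding `F` and `B = ∑ c n Xⁿ`. Appending a
letter to an avoiding word of length `n` gives either an avoiding word of length `n + 1` or a word
`s ++ f` with `f ∈ F` and `s` avoiding (the only new occurrence is a suffix), so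
`m c n ≤ c (n + 1) + ∑_{f ∈ F} c (n + 1 - |f|)`. This says exactly that `A * B` has
nonnegative coefficients, and its constant coefficient is `1`; hence `B = (A * B) * A⁻¹` has
positive coefficients when `A⁻¹` does.
-/

open Finset PowerSeries

section Words

variable {α : Type*}

def Avoids (F : Finset (List α)) (w : List α) : Prop := ∀ f ∈ F, ¬ f <:+: w

theorem Avoids.of_prefix {F : Finset (List α)} {u s : List α} (hu : Avoids F u) (hs : s <+: u) :
    Avoids F s :=
  fun f hf hfs => hu f hf (hfs.trans hs.isInfix)

theorem Avoids.nil {F : Finset (List α)} (hF : [] ∉ F) : Avoids F [] :=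
  fun _ hf hfnil => hF (List.infix_nil.1 hfnil ▸ hf)

theorem Avoids.exists_eq_append_of_not_avoids_append_singleton {F : Finset (List α)} (hF : [] ∉ F)
    {u : List α} {x : α} (hu : Avoids F u) (hux : ¬ Avoids F (u ++ [x])) :
    ∃ s, Avoids F s ∧ ∃ f ∈ F, u ++ [x] = s ++ f := by
  simp only [Avoids, not_forall, not_not] at hux
  obtain ⟨f, hf, hfux⟩ := hux
  rcases List.infix_concat_iff.1 hfux with hsuf | hfu
  · rcases List.suffix_concat_iff.1 hsuf with rfl | ⟨t, rfl, s, rfl⟩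
    · exact absurd hf hF
    · exact ⟨s, hu.of_prefix (List.prefix_append s t), _, hf, by simp⟩
  · exact absurd hfu (hu f hf)

variable [Finite α]

noncomputable def avoidingWords (F : Finset (List α)) (n : ℕ) : Finset (List α) :=
  Set.Finite.toFinset (s := {w | w.length = n ∧ Avoids F w})
    ((List.finite_length_eq α n).subset fun _ hw => hw.1)

@[simp]
theorem mem_avoidingWords {F : Finset (List α)} {n : ℕ} {w : List α} :
    w ∈ avoidingWords F n ↔ w.length = n ∧ Avoids F w :=
  Set.Finite.mem_toFinset _

theorem avoidingWords_zero {F : Finset (List α)} (hF : [] ∉ F) : avoidingWords F 0 = {[]} := by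
  ext w
  simp only [mem_avoidingWords, List.length_eq_zero_iff, mem_singleton, and_iff_left_iff_imp]
  rintro rfl
  exact Avoids.nil hF

theorem card_mul_card_avoidingWords_le [Fintype α] {F : Finset (List α)} (hF : [] ∉ F) (n : ℕ) :
    Fintype.card α * #(avoidingWords F n) ≤ #(avoidingWords F (n + 1)) +
      ∑ f ∈ F with f.length ≤ n + 1, #(avoidingWords F (n + 1 - f.length)) := by
  classical
  set extensions := (avoidingWords F n ×ˢ univ).image fun p : List α × α => p.1 ++ [p.2]
  have hinj : Function.Injective fun p : List α × α => p.1 ++ [p.2] := by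
    rintro ⟨u, x⟩ ⟨v, y⟩ h
    obtain ⟨rfl, h⟩ := List.append_inj' h rfl
    simp_all
  have hsub : extensions ⊆ avoidingWords F (n + 1) ∪ {f ∈ F | f.length ≤ n + 1}.biUnion
      fun f => (avoidingWords F (n + 1 - f.length)).image (· ++ f) := by
    simp only [extensions, subset_iff, mem_image, mem_product, mem_univ, and_true, Prod.exists]
    rintro _ ⟨u, x, hu, rfl⟩
    rw [mem_avoidingWords] at hu
    by_cases hux : Avoids F (u ++ [x])
    · exact mem_union_left _ (mem_avoidingWords.2 ⟨by simp [hu.1], hux⟩)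
    obtain ⟨s, hs, f, hf, hsf⟩ := hu.2.exists_eq_append_of_not_avoids_append_singleton hF hux
    have hlen : s.length + f.length = n + 1 := by simpa [hu.1] using congrArg List.length hsf.symm
    refine mem_union_right _ (mem_biUnion.2 ⟨f, mem_filter.2 ⟨hf, by omega⟩, mem_image.2 ?_⟩)
    exact ⟨s, mem_avoidingWords.2 ⟨by omega, hs⟩, hsf.symm⟩
  calc Fintype.card α * #(avoidingWords F n) = #extensions := by
        rw [card_image_of_injective _ hinj, card_product, card_univ, mul_comm]
    _ ≤ _ := (card_le_card hsub).trans (card_union_le _ _)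
    _ ≤ _ := Nat.add_le_add_left (card_biUnion_le.trans (sum_le_sum fun _ _ => card_image_le)) _

end Words

section Series

variable (R : Type*) [CommRing R] {α : Type*}

noncomputable def lengthCountSeries (F : Finset (List α)) : R⟦X⟧ :=
  mk fun k => (#{f ∈ F | f.length = k} : R)

noncomputable def avoidingWordsSeries [Finite α] (F : Finset (List α)) : R⟦X⟧ :=
  mk fun n => (#(avoidingWords F n) : R)

variable {R}

theorem coeff_lengthCountSeries_mul (F : Finset (List α)) (c : ℕ → R) (n : ℕ) :
    coeff n (lengthCountSeries R F * mk c) = ∑ f ∈ F with f.length ≤ n, c (n - f.length) := by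
  have hmaps : ∀ f ∈ {f ∈ F | f.length ≤ n}, f.length ∈ range (n + 1) := fun f hf => by
    simpa [Nat.lt_succ_iff] using (mem_filter.1 hf).2
  rw [coeff_mul, Nat.sum_antidiagonal_eq_sum_range_succ_mk, ← sum_fiberwise_of_maps_to hmaps]
  refine sum_congr rfl fun k hk => ?_
  have hfiber : {f ∈ {f ∈ F | f.length ≤ n} | f.length = k} = {f ∈ F | f.length = k} := by
    rw [filter_filter]
    exact filter_congr fun f _ => ⟨And.right, fun h => ⟨by simpa [h, Nat.lt_succ_iff] using hk, h⟩⟩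
  rw [hfiber, sum_congr rfl fun f hf => by rw [(mem_filter.1 hf).2], sum_const, nsmul_eq_mul]
  simp [lengthCountSeries]

theorem constantCoeff_lengthCountSeries {F : Finset (List α)} (hF : [] ∉ F) :
    constantCoeff (lengthCountSeries R F) = 0 := by
  have hempty : {f ∈ F | f.length = 0} = ∅ :=
    filter_eq_empty_iff.2 fun f hf hf0 => hF (List.length_eq_zero_iff.1 hf0 ▸ hf)
  rw [← coeff_zero_eq_constantCoeff_apply, lengthCountSeries, coeff_mk, hempty, card_empty,
    Nat.cast_zero]

variable [Fintype α]

theorem constantCoeff_mul_avoidingWordsSeries {F : Finset (List α)} (hF : [] ∉ F) :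
    constantCoeff ((1 - C (Fintype.card α : R) * X + lengthCountSeries R F) *
      avoidingWordsSeries R F) = 1 := by
  rw [← coeff_zero_eq_constantCoeff_apply, avoidingWordsSeries]
  simp [constantCoeff_lengthCountSeries hF, avoidingWords_zero hF]

theorem coeff_mul_avoidingWordsSeries_nonneg [PartialOrder R] [IsOrderedRing R]
    {F : Finset (List α)} (hF : [] ∉ F) (n : ℕ) :
    0 ≤ coeff n ((1 - C (Fintype.card α : R) * X + lengthCountSeries R F) *
      avoidingWordsSeries R F) := by
  rcases n with _ | n
  · rw [coeff_zero_eq_constantCoeff_apply, constantCoeff_mul_avoidingWordsSeries hF]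
    exact zero_le_one
  have hcount := Nat.mono_cast (α := R) (card_mul_card_avoidingWords_le hF n)
  push_cast at hcount
  rw [add_mul, sub_mul, map_add, map_sub, avoidingWordsSeries, coeff_lengthCountSeries_mul,
    mul_assoc, coeff_C_mul, coeff_succ_X_mul]
  simp only [one_mul, coeff_mk]
  rw [sub_add_eq_add_sub, sub_nonneg]
  exact hcount

end Series

theorem PowerSeries.coeff_mul_pos {R : Type*} [CommSemiring R] [PartialOrder R]
    [IsStrictOrderedRing R] {P Q : R⟦X⟧} (hP : ∀ n, 0 ≤ coeff n P) (hP₀ : 0 < constantCoeff P)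
    (hQ : ∀ n, 0 < coeff n Q) (n : ℕ) : 0 < coeff n (P * Q) := by
  rw [coeff_mul]
  refine sum_pos' (fun p _ => mul_nonneg (hP p.1) (hQ p.2).le) ⟨(0, n), by simp, ?_⟩
  rw [coeff_zero_eq_constantCoeff_apply]
  exact mul_pos hP₀ (hQ n)

theorem exists_long_string_avoiding_of_inv_coeff_pos_general (m : ℕ)
    (F : Finset (List (Fin m))) (hF : ∀ w ∈ F, 2 ≤ w.length)
    (A : PowerSeries ℝ)
    (hA : A = PowerSeries.mk (fun j => if j = 0 then 1 else if j = 1 then -(m : ℝ)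
        else ((F.filter (fun w => w.length = j)).card : ℝ)))
    (hpos : ∀ n : ℕ, 0 < PowerSeries.coeff (R := ℝ) n A⁻¹) :
    ∀ N : ℕ, ∃ w : List (Fin m), w.length = N ∧ ∀ f ∈ F, ¬ f <:+: w := by
  intro N
  have hF₀ : [] ∉ F := fun h => by simpa using hF [] h
  have hA' : A = 1 - C (Fintype.card (Fin m) : ℝ) * X + lengthCountSeries ℝ F := by
    have hF₁ : {f ∈ F | f.length = 1} = ∅ :=
      filter_eq_empty_iff.2 fun f hf hf₁ => by have := hF f hf; omega
    ext (_ | _ | k) <;> simp [hA, lengthCountSeries, hF₀, hF₁, -map_natCast]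
  have hA₀ : constantCoeff A ≠ 0 := by simp [hA]
  have hB : avoidingWordsSeries ℝ F = A * avoidingWordsSeries ℝ F * A⁻¹ := by
    rw [mul_comm A, mul_assoc, PowerSeries.mul_inv_cancel _ hA₀, mul_one]
  have hcoeff := coeff_mul_pos (coeff_mul_avoidingWordsSeries_nonneg hF₀)
    (by rw [constantCoeff_mul_avoidingWordsSeries hF₀]; exact one_pos) hpos N
  rw [← hA', ← hB, avoidingWordsSeries, coeff_mk, Nat.cast_pos, card_pos] at hcoeff
  obtain ⟨w, hw⟩ := hcoeff
  exact ⟨w, mem_avoidingWords.1 hw⟩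

/-- Golod-style criterion: let `F` be a finite set of forbidden strings over `Fin m`
(each of length ≥ 2), `a_j` the number of forbidden strings of length `j`, and
`A = 1 − m·X + ∑_{j≥2} a_j·X^j ∈ ℝ⟦X⟧`.  If every coefficient of `A⁻¹` is strictly
positive, then there exist arbitrarily long strings avoiding all forbidden
substrings. -/
theorem exists_long_string_avoiding_of_inv_coeff_pos (m : ℕ) (hm : 1 ≤ m)
    (F : Finset (List (Fin m))) (hF : ∀ w ∈ F, 2 ≤ w.length)
    (A : PowerSeries ℝ)
    (hA : A = PowerSeries.mk (fun j => if j = 0 then 1 else if j = 1 then -(m : ℝ)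
        else ((F.filter (fun w => w.length = j)).card : ℝ)))
    (hpos : ∀ n : ℕ, 0 < PowerSeries.coeff (R := ℝ) n A⁻¹) :
    ∀ N : ℕ, ∃ w : List (Fin m), w.length = N ∧ ∀ f ∈ F, ¬ f <:+: w :=
  exists_long_string_avoiding_of_inv_coeff_pos_general m F hF A hA hpos
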